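/- arXiv:2504.12206 — 4 statements merged into one kernel-verified Lean document; each statement's English description precedes it below -/
import Mathlib

section
/- Let G be an abelian group (written multiplicatively) over a field k of characteristic zero, and let Φ: G × G × G → kˣ be a normalized 3-cocycle, i.e. Φ(ef,g,h)·Φ(e,f,gh) = Φ(e,f,g)·Φ(e,fg,h)·Φ(f,g,h) for all e,f,g,h and Φ(f,1,g)=1. For g ∈ G define Φ_g(x,y) = Φ(g,x,y)·Φ(x,y,g)/Φ(x,g,y). Then Φ_g is a 2-cocycle on G, i.e. Φ_g(x,y)·Φ_g(xy,z) = Φ_g(y,z)·Φ_g(x,yz) for all x,y,z ∈ G. -/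
/-- The 2-cochain `Φ_g(x,y) = Φ(g,x,y)·Φ(x,y,g)/Φ(x,g,y)` associated to a 3-cocycle `Φ`. -/
def phiTwo {k : Type*} [Field k] {G : Type*} (Φ : G → G → G → kˣ) (g x y : G) : kˣ :=
  Φ g x y * Φ x y g / Φ x g y

/-- If `Φ` is a normalized 3-cocycle on an abelian group `G`, then for every `g ∈ G` the
function `Φ_g` is a 2-cocycle on `G`. -/
theorem phiTwo_is_two_cocycle {k : Type*} [Field k] [CharZero k]
    {G : Type*} [CommGroup G] (Φ : G → G → G → kˣ)
    (hcoc : ∀ e f g h : G,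
      Φ (e * f) g h * Φ e f (g * h) = Φ e f g * Φ e (f * g) h * Φ f g h)
    (hnorm : ∀ f g : G, Φ f 1 g = 1) (g : G) :
    ∀ x y z : G,
      phiTwo Φ g x y * phiTwo Φ g (x * y) z = phiTwo Φ g y z * phiTwo Φ g x (y * z) := by
  intro x y z
  have hA := hcoc g x y z
  have hB := hcoc x g y z
  have hC := hcoc x y g z
  have hD := hcoc x y z g
  rw [mul_comm x g, mul_comm g y] at hB
  rw [mul_comm g z] at hC
  have hA' := congrArg (Units.val) hA
  have hB' := congrArg (Units.val) hB
  have hC' := congrArg (Units.val) hC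
  have hD' := congrArg (Units.val) hD
  push_cast at hA' hB' hC' hD'
  rw [Units.ext_iff]
  push_cast [phiTwo]
  rw [div_mul_div_comm, div_mul_div_comm, div_eq_div_iff (mul_ne_zero (Units.ne_zero _) (Units.ne_zero _)) (mul_ne_zero (Units.ne_zero _) (Units.ne_zero _))]
  apply mul_right_cancel₀ (b := (↑(Φ x y z) * ↑(Φ (g * x) y z) * ↑(Φ x (y * g) z)
      * ↑(Φ x y (z * g)) : k))
      (by exact mul_ne_zero (mul_ne_zero (mul_ne_zero (Units.ne_zero _) (Units.ne_zero _))
        (Units.ne_zero _)) (Units.ne_zero _))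
  linear_combination
    (-((Φ (g*x) y z : k) * (Φ x g (y*z) : k) * (Φ x y g : k) * (Φ x (y*g) z : k)
        * (Φ y g z : k) * (Φ (x*y) z g : k) * (Φ x y (z*g) : k))) * hA' +
    ((Φ (g*x) y z : k) * (Φ g x (y*z) : k) * (Φ x y g : k) * (Φ x (y*g) z : k)
        * (Φ y g z : k) * (Φ (x*y) z g : k) * (Φ x y (z*g) : k)) * hB' +
    (-((Φ (g*x) y z : k) * (Φ g x (y*z) : k) * (Φ x g y : k) * (Φ x (y*g) z : k)
        * (Φ g y z : k) * (Φ (x*y) z g : k) * (Φ x y (z*g) : k))) * hC' +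
    ((Φ (g*x) y z : k) * (Φ g x (y*z) : k) * (Φ x g y : k) * (Φ x (y*g) z : k)
        * (Φ g y z : k) * (Φ (x*y) g z : k) * (Φ x y (z*g) : k)) * hD'
end

section
/- Let G = Z_{m₁} × ⋯ × Z_{m_n} be a finite abelian group with generators g₁,…,g_n, and let ω be the 3-cocycle given by ω(g₁^{i₁}⋯g_n^{i_n}, g₁^{j₁}⋯g_n^{j_n}, g₁^{k₁}⋯g_n^{k_n}) = ∏_l ζ_{m_l}^{c_l i_l ⌊(j_l+k_l)/m_l⌋} · ∏_{s<t} ζ_{m_t}^{c_{st} i_t ⌊(j_s+k_s)/m_s⌋} · ∏_{r<s<t} ζ^{c_{rst} i_r j_s k_t}, where ζ_m is a primitive m-th root of unity and exponents are taken with 0 ≤ i_l,j_l,k_l < m_l. Then ω satisfies the normalized 3-cocycle condition ω(ef,g,h)ω(e,f,gh) = ω(e,f,g)ω(e,fg,h)ω(f,g,h) and ω(f,1,g)=1. -/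
private theorem keyDiv (M : ℕ) (hM : 0 < M) (x y : ℕ) :
    (x % M + y) / M + x / M = (x + y) / M := by
  conv_rhs => rw [← Nat.mod_add_div x M]
  rw [Nat.add_right_comm, Nat.add_mul_div_left _ _ hM]

private theorem keyexp (M N C a b bs g d : ℕ) (hM : 0 < M) :
    C * ((a + b) % N) * ((g + d) / M) + C * a * ((bs + (g + d) % M) / M) ≡
    C * a * ((bs + g) / M) + C * a * (((bs + g) % M + d) / M) + C * b * ((g + d) / M) [MOD N] := by
  have h1 : (bs + (g + d) % M) / M + (g + d) / M = (bs + g + d) / M := by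
    rw [Nat.add_comm bs ((g + d) % M), keyDiv M hM (g + d) bs]
    have e : g + d + bs = bs + g + d := by ring
    rw [e]
  have h2 : ((bs + g) % M + d) / M + (bs + g) / M = (bs + g + d) / M := keyDiv M hM (bs + g) d
  have h3 := Nat.mod_add_div (a + b) N
  set A1 := (a + b) % N with hA1
  set p := (a + b) / N with hp
  set q := (g + d) / M with hq
  set v := (bs + (g + d) % M) / M with hv
  set r := (bs + g) / M with hr
  set u := ((bs + g) % M + d) / M with hu
  set T := (bs + g + d) / M with hT
  have hfinal : C * A1 * q + C * a * v + N * (C * p * q) =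
      C * a * r + C * a * u + C * b * q := by
    have e1 : C * A1 * q + N * (C * p * q) = C * (a + b) * q := by rw [← h3]; ring
    have e2 : C * a * v + C * a * q = C * a * T := by rw [← h1]; ring
    have e3 : C * a * u + C * a * r = C * a * T := by rw [← h2]; ring
    have e4 : C * (a + b) * q = C * a * q + C * b * q := by ring
    linarith
  show (C * A1 * q + C * a * v) % N = (C * a * r + C * a * u + C * b * q) % N
  rw [← hfinal, Nat.add_mul_mod_self_left]

private theorem keyC (G Mr Ms Mt C a b bs gs gt ht : ℕ)
    (h1 : G ∣ Mr) (h2 : G ∣ Ms) (h3 : G ∣ Mt) :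
    C * ((a + b) % Mr) * gs * ht + C * a * bs * ((gt + ht) % Mt) ≡
    C * a * bs * gt + C * a * ((bs + gs) % Ms) * ht + C * b * gs * ht [MOD G] := by
  have hA : (a + b) % Mr ≡ a + b [MOD G] := (Nat.mod_modEq (a + b) Mr).of_dvd h1
  have hB : (gt + ht) % Mt ≡ gt + ht [MOD G] := (Nat.mod_modEq _ _).of_dvd h3
  have hC : (bs + gs) % Ms ≡ bs + gs [MOD G] := (Nat.mod_modEq _ _).of_dvd h2
  calc C * ((a + b) % Mr) * gs * ht + C * a * bs * ((gt + ht) % Mt)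
      ≡ C * (a + b) * gs * ht + C * a * bs * (gt + ht) [MOD G] :=
        Nat.ModEq.add (((hA.mul_left C).mul_right gs).mul_right ht)
          (hB.mul_left (C * a * bs))
    _ = C * a * bs * gt + C * a * (bs + gs) * ht + C * b * gs * ht := by ring
    _ ≡ C * a * bs * gt + C * a * ((bs + gs) % Ms) * ht + C * b * gs * ht [MOD G] :=
        ((((hC.symm.mul_left (C * a)).mul_right ht).add_left (C * a * bs * gt)).add_right
          (C * b * gs * ht))

private theorem pw {k : Type*} [Field k] (u : kˣ) (M N C a b bs g d : ℕ)
    (hM : 0 < M) (hu : orderOf u = N) :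
    u ^ (C * ((a + b) % N) * ((g + d) / M)) * u ^ (C * a * ((bs + (g + d) % M) / M)) =
    u ^ (C * a * ((bs + g) / M)) * u ^ (C * a * (((bs + g) % M + d) / M)) *
      u ^ (C * b * ((g + d) / M)) := by
  rw [← pow_add, ← pow_add, ← pow_add, pow_eq_pow_iff_modEq, hu]
  exact keyexp M N C a b bs g d hM

private theorem pwC {k : Type*} [Field k] (u : kˣ) (G Mr Ms Mt C a b bs gs gt ht : ℕ)
    (hu : orderOf u = G) (h1 : G ∣ Mr) (h2 : G ∣ Ms) (h3 : G ∣ Mt) :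
    u ^ (C * ((a + b) % Mr) * gs * ht) * u ^ (C * a * bs * ((gt + ht) % Mt)) =
    u ^ (C * a * bs * gt) * u ^ (C * a * ((bs + gs) % Ms) * ht) *
      u ^ (C * b * gs * ht) := by
  rw [← pow_add, ← pow_add, ← pow_add, pow_eq_pow_iff_modEq, hu]
  exact keyC G Mr Ms Mt C a b bs gs gt ht h1 h2 h3

private theorem rearr {k : Type*} [Field k] (a1 b1 c1 a2 b2 c2 : kˣ) :
    (a1 * b1 * c1) * (a2 * b2 * c2) = (a1 * a2) * (b1 * b2) * (c1 * c2) := by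
  rw [mul_mul_mul_comm (a1 * b1) c1 (a2 * b2) c2, mul_mul_mul_comm a1 b1 a2 b2]

private theorem rearr3 {k : Type*} [Field k] (a1 b1 c1 a2 b2 c2 a3 b3 c3 : kˣ) :
    (a1 * b1 * c1) * (a2 * b2 * c2) * (a3 * b3 * c3) =
    (a1 * a2 * a3) * (b1 * b2 * b3) * (c1 * c2 * c3) := by
  rw [rearr a1 b1 c1 a2 b2 c2, rearr (a1 * a2) (b1 * b2) (c1 * c2) a3 b3 c3]

open Finset in
/-- The explicit 3-cochain `ω_c` on `G = Z_{m₁} × ⋯ × Z_{m_n}` determined by the data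
`c_l, c_{st}, c_{rst}`, with values
`ω(x,y,z) = ∏_l ζ_{m_l}^{c_l x_l ⌊(y_l+z_l)/m_l⌋} · ∏_{s<t} ζ_{m_t}^{c_{st} x_t ⌊(y_s+z_s)/m_s⌋}
· ∏_{r<s<t} ζ_{(m_r,m_s,m_t)}^{c_{rst} x_r y_s z_t}`. -/
def omegaC {k : Type*} [Field k] (n : ℕ) (m : Fin n → ℕ)
    (ζ : Fin n → kˣ) (ζ₃ : Fin n → Fin n → Fin n → kˣ)
    (c : Fin n → ℕ) (c₂ : Fin n → Fin n → ℕ) (c₃ : Fin n → Fin n → Fin n → ℕ)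
    (x y z : ∀ l, ZMod (m l)) : kˣ :=
  (∏ l, ζ l ^ (c l * (x l).val * (((y l).val + (z l).val) / m l))) *
  (∏ s, ∏ t, if s < t then
      ζ t ^ (c₂ s t * (x t).val * (((y s).val + (z s).val) / m s)) else 1) *
  (∏ r, ∏ s, ∏ t, if r < s ∧ s < t then
      ζ₃ r s t ^ (c₃ r s t * (x r).val * (y s).val * (z t).val) else 1)

/-- The 3-cochain `ω_c` on `G = Z_{m₁} × ⋯ × Z_{m_n}` is a normalized 3-cocycle:
it satisfies `ω(e+f,g,h)ω(e,f,g+h) = ω(e,f,g)ω(e,f+g,h)ω(f,g,h)` and `ω(f,0,g) = 1`. -/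
theorem omegaC_is_normalized_three_cocycle {k : Type*} [Field k] [CharZero k]
    (n : ℕ) (m : Fin n → ℕ) (hm : ∀ l, 0 < m l)
    (ζ : Fin n → kˣ) (hζ : ∀ l, orderOf (ζ l) = m l)
    (ζ₃ : Fin n → Fin n → Fin n → kˣ)
    (hζ₃ : ∀ r s t, orderOf (ζ₃ r s t) = Nat.gcd (m r) (Nat.gcd (m s) (m t)))
    (c : Fin n → ℕ) (hc : ∀ l, c l < m l)
    (c₂ : Fin n → Fin n → ℕ) (hc₂ : ∀ s t, s < t → c₂ s t < Nat.gcd (m s) (m t))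
    (c₃ : Fin n → Fin n → Fin n → ℕ)
    (hc₃ : ∀ r s t, r < s → s < t → c₃ r s t < Nat.gcd (m r) (Nat.gcd (m s) (m t))) :
    (∀ e f g h : ∀ l, ZMod (m l),
      omegaC n m ζ ζ₃ c c₂ c₃ (e + f) g h * omegaC n m ζ ζ₃ c c₂ c₃ e f (g + h) =
        omegaC n m ζ ζ₃ c c₂ c₃ e f g * omegaC n m ζ ζ₃ c c₂ c₃ e (f + g) h *
          omegaC n m ζ ζ₃ c c₂ c₃ f g h) ∧
    (∀ f g : ∀ l, ZMod (m l), omegaC n m ζ ζ₃ c c₂ c₃ f 0 g = 1) := by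
  constructor
  · intro e f g h
    have hval : ∀ (x y : ∀ l, ZMod (m l)) (l : Fin n),
        ((x + y) l).val = ((x l).val + (y l).val) % m l := by
      intro x y l
      haveI : NeZero (m l) := ⟨(hm l).ne'⟩
      rw [Pi.add_apply, ZMod.val_add]
    simp only [omegaC, hval]
    rw [rearr, rearr3]
    refine congrArg₂ HMul.hMul (congrArg₂ HMul.hMul ?_ ?_) ?_
    · simp only [← Finset.prod_mul_distrib]
      refine Finset.prod_congr rfl fun l _ => ?_
      exact pw (ζ l) (m l) (m l) (c l) _ _ _ _ _ (hm l) (hζ l)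
    · simp only [← Finset.prod_mul_distrib]
      refine Finset.prod_congr rfl fun s _ => Finset.prod_congr rfl fun t _ => ?_
      by_cases hst : s < t
      · simp only [if_pos hst]
        exact pw (ζ t) (m s) (m t) (c₂ s t) _ _ _ _ _ (hm s) (hζ t)
      · simp [if_neg hst]
    · simp only [← Finset.prod_mul_distrib]
      refine Finset.prod_congr rfl fun r _ => Finset.prod_congr rfl fun s _ =>
        Finset.prod_congr rfl fun t _ => ?_
      by_cases hrst : r < s ∧ s < t
      · simp only [if_pos hrst]
        exact pwC (ζ₃ r s t) _ (m r) (m s) (m t) (c₃ r s t) _ _ _ _ _ _ (hζ₃ r s t)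
          (Nat.gcd_dvd_left _ _)
          ((Nat.gcd_dvd_right _ _).trans (Nat.gcd_dvd_left _ _))
          ((Nat.gcd_dvd_right _ _).trans (Nat.gcd_dvd_right _ _))
      · simp [if_neg hrst]
  · intro f g
    have h0 : ∀ l : Fin n, ((0 : ∀ l, ZMod (m l)) l).val = 0 := by
      intro l
      haveI : NeZero (m l) := ⟨(hm l).ne'⟩
      simp
    have h0' : ∀ l : Fin n, (0 : ZMod (m l)).val = 0 := by
      intro l
      haveI : NeZero (m l) := ⟨(hm l).ne'⟩
      exact ZMod.val_zero
    have hlt : ∀ l : Fin n, (g l).val / m l = 0 := by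
      intro l
      haveI : NeZero (m l) := ⟨(hm l).ne'⟩
      exact Nat.div_eq_of_lt (ZMod.val_lt _)
    simp [omegaC, h0, h0', hlt]
end

section
/- Let q ∈ kˣ be a root of unity of order n ≥ 3, let β₁, β₂ ∈ kˣ with β₁β₂ a power of q, say β₁β₂ = q^k with 0 ≤ k < n. Consider the 2n × 2n braiding matrix on basis X₁,…,X_n,Y₁,…,Y_n where the off-diagonal products satisfy q_{X_s,Y_t}·q_{Y_t,X_s} = β₁β₂·q^{s+t−2}. Then if n = 3, one can choose indices so that the associated generalized Dynkin diagram contains a 6-cycle (each X-vertex connected to exactly two Y-vertices, forming a cycle), and if n ≥ 4, there exist s₁ ≠ s₂ ∈ {1,2} and t₁ ≠ t₂ ∈ {1,…,n} such that k + s_i + t_j − 2 ≢ 0 (mod n) for all four pairs (i,j), i.e. the diagram contains a 4-cycle. -/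
private lemma not_dvd_lt {n m : ℕ} (h1 : 0 < m) (h2 : m < n) : ¬ n ∣ m :=
  fun h => absurd (Nat.le_of_dvd h1 h) (by omega)

private lemma not_dvd_between {n m : ℕ} (h1 : n < m) (h2 : m < 2 * n) : ¬ n ∣ m := by
  rintro ⟨c, rfl⟩
  rcases Nat.lt_or_ge c 2 with h | h
  · interval_cases c <;> omega
  · have : 2 * n ≤ n * c := by nlinarith
    omega

/-- Let `q` be a root of unity of order `n ≥ 3` and `β₁β₂ = q^k` with `0 ≤ k < n`.
In the generalized Dynkin diagram of the `2n × 2n` braiding with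
`q_{X_s,Y_t}·q_{Y_t,X_s} = β₁β₂·q^{s+t−2}`, the vertices `X_s` and `Y_t` are joined iff
`β₁β₂·q^{s+t−2} ≠ 1`.  If `n = 3` one can choose indices producing a 6-cycle
(`X₁—Y₁', X₁—Y₃', X₂—Y₃', X₂—Y₂', X₃—Y₂', X₃—Y₁'`), and if `n ≥ 4` there exist
`s₁ = 1 ≠ s₂ = 2` and `t₁ ≠ t₂ ∈ {1,…,n}` such that all four pairs are joined,
i.e. the diagram contains a 4-cycle. -/
theorem dynkin_cycle_from_braiding {k : Type*} [Field k] [CharZero k]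
    (n kk : ℕ) (hn : 3 ≤ n) (hk : kk < n)
    (q β₁ β₂ : kˣ) (hq : orderOf q = n) (hβ : β₁ * β₂ = q ^ kk) :
    (n = 3 → ∃ b : Fin 3 → ℕ, Function.Injective b ∧ (∀ i, b i ∈ Finset.Icc 1 3) ∧
      β₁ * β₂ * q ^ (1 + b 0 - 2) ≠ 1 ∧ β₁ * β₂ * q ^ (1 + b 2 - 2) ≠ 1 ∧
      β₁ * β₂ * q ^ (2 + b 2 - 2) ≠ 1 ∧ β₁ * β₂ * q ^ (2 + b 1 - 2) ≠ 1 ∧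
      β₁ * β₂ * q ^ (3 + b 1 - 2) ≠ 1 ∧ β₁ * β₂ * q ^ (3 + b 0 - 2) ≠ 1) ∧
    (4 ≤ n → ∃ t₁ t₂ : ℕ, t₁ ∈ Finset.Icc 1 n ∧ t₂ ∈ Finset.Icc 1 n ∧ t₁ ≠ t₂ ∧
      β₁ * β₂ * q ^ (1 + t₁ - 2) ≠ 1 ∧ β₁ * β₂ * q ^ (1 + t₂ - 2) ≠ 1 ∧
      β₁ * β₂ * q ^ (2 + t₁ - 2) ≠ 1 ∧ β₁ * β₂ * q ^ (2 + t₂ - 2) ≠ 1) := by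
  have key : ∀ m : ℕ, ¬ n ∣ kk + m → β₁ * β₂ * q ^ m ≠ 1 := by
    intro m hm h
    rw [hβ, ← pow_add] at h
    exact hm (hq ▸ orderOf_dvd_of_pow_eq_one h)
  constructor
  · intro h3
    subst h3
    interval_cases kk
    · exact ⟨![3, 1, 2], by decide, by decide,
        key 2 (by decide), key 1 (by decide), key 2 (by decide),
        key 1 (by decide), key 2 (by decide), key 4 (by decide)⟩
    · exact ⟨![2, 3, 1], by decide, by decide,
        key 1 (by decide), key 0 (by decide), key 1 (by decide),
        key 3 (by decide), key 4 (by decide), key 3 (by decide)⟩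
    · exact ⟨![1, 2, 3], by decide, by decide,
        key 0 (by decide), key 2 (by decide), key 3 (by decide),
        key 2 (by decide), key 3 (by decide), key 2 (by decide)⟩
  · intro h4
    rcases Nat.eq_zero_or_pos kk with hk0 | hk0
    · subst hk0
      exact ⟨2, 3, by simp; omega, by simp; omega, by omega,
        key 1 (not_dvd_lt (by omega) (by omega)),
        key 2 (not_dvd_lt (by omega) (by omega)),
        key 2 (not_dvd_lt (by omega) (by omega)),
        key 3 (not_dvd_lt (by omega) (by omega))⟩
    rcases eq_or_ne kk (n - 1) with hk1 | hk1
    · exact ⟨3, 4, by simp; omega, by simp; omega, by omega,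
        key 2 (not_dvd_between (by omega) (by omega)),
        key 3 (not_dvd_between (by omega) (by omega)),
        key 3 (not_dvd_between (by omega) (by omega)),
        key 4 (not_dvd_between (by omega) (by omega))⟩
    rcases eq_or_ne kk (n - 2) with hk2 | hk2
    · exact ⟨1, 4, by simp; omega, by simp; omega, by omega,
        key 0 (not_dvd_lt (by omega) (by omega)),
        key 3 (not_dvd_between (by omega) (by omega)),
        key 1 (not_dvd_lt (by omega) (by omega)),
        key 4 (not_dvd_between (by omega) (by omega))⟩
    · -- here 1 ≤ kk ≤ n - 3
      exact ⟨1, 2, by simp; omega, by simp; omega, by omega,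
        key 0 (not_dvd_lt (by omega) (by omega)),
        key 1 (not_dvd_lt (by omega) (by omega)),
        key 1 (not_dvd_lt (by omega) (by omega)),
        key 2 (not_dvd_lt (by omega) (by omega))⟩
end

section
/- Let G be a finite abelian group, Φ a normalized 3-cocycle on G, and g₁, g₂, g₃ ∈ G. Define b(x,y,z) = Φ_x(y,z)/Φ_x(z,y), where Φ_x(y,z) = Φ(x,y,z)Φ(y,z,x)/Φ(y,x,z). Then b is multiplicative in each argument: b(x₁x₂, y, z) = b(x₁,y,z)·b(x₂,y,z), and similarly in y and z; consequently the order of b(g₁,g₂,g₃) in kˣ divides the gcd of the orders of g₁, g₂, g₃. -/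
/-- The antisymmetrized trilinear form `b(x,y,z) = Φ_x(y,z)/Φ_x(z,y)`, where
`Φ_x(y,z) = Φ(x,y,z)Φ(y,z,x)/Φ(y,x,z)` is the 2-cocycle associated to `Φ`. -/
def bfun {k : Type*} [Field k] {G : Type*} (Φ : G → G → G → kˣ) (x y z : G) : kˣ :=
  (Φ x y z * Φ y z x / Φ y x z) / (Φ x z y * Φ z y x / Φ z x y)

/-- If `f : G → kˣ` is multiplicative on a finite group, the order of `f x` divides
the order of `x`. -/
lemma bfun_aux_order {k : Type*} [Field k] {G : Type*} [CommGroup G] [Fintype G]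
    (f : G → kˣ) (hf : ∀ a b : G, f (a * b) = f a * f b) (x : G) :
    orderOf (f x) ∣ orderOf x := by
  have h1 : f 1 = 1 := by
    have h := hf 1 1
    rw [one_mul] at h
    exact left_eq_mul.mp h
  have hp : ∀ n : ℕ, f (x ^ n) = f x ^ n := by
    intro n
    induction n with
    | zero => simpa using h1
    | succ m ih => rw [pow_succ, hf, ih, pow_succ]
  apply orderOf_dvd_of_pow_eq_one
  rw [← hp, pow_orderOf_eq_one x, h1]

set_option maxHeartbeats 3200000 in
/-- For a normalized 3-cocycle `Φ` on a finite abelian group `G`, the form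
`b(x,y,z) = Φ_x(y,z)/Φ_x(z,y)` is multiplicative in each argument; consequently the
order of `b(g₁,g₂,g₃)` in `kˣ` divides `gcd(|g₁|, |g₂|, |g₃|)`. -/
theorem bfun_multiplicative_and_order_dvd {k : Type*} [Field k] [CharZero k]
    {G : Type*} [CommGroup G] [Fintype G] (Φ : G → G → G → kˣ)
    (hcoc : ∀ e f g h : G,
      Φ (e * f) g h * Φ e f (g * h) = Φ e f g * Φ e (f * g) h * Φ f g h)
    (hnorm : ∀ f g : G, Φ f 1 g = 1) (g₁ g₂ g₃ : G) :
    (∀ x₁ x₂ y z : G, bfun Φ (x₁ * x₂) y z = bfun Φ x₁ y z * bfun Φ x₂ y z) ∧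
    (∀ x y₁ y₂ z : G, bfun Φ x (y₁ * y₂) z = bfun Φ x y₁ z * bfun Φ x y₂ z) ∧
    (∀ x y z₁ z₂ : G, bfun Φ x y (z₁ * z₂) = bfun Φ x y z₁ * bfun Φ x y z₂) ∧
    orderOf (bfun Φ g₁ g₂ g₃) ∣ Nat.gcd (orderOf g₁) (Nat.gcd (orderOf g₂) (orderOf g₃)) := by
  have hmul1 : ∀ x₁ x₂ y z : G, bfun Φ (x₁ * x₂) y z = bfun Φ x₁ y z * bfun Φ x₂ y z := by
    intro x₁ x₂ y z
    have key : (Φ (x₁ * x₂) y z * Φ x₁ x₂ (y * z)) * (Φ (x₁ * y) z x₂ * Φ x₁ y (z * x₂)) * (Φ (x₁ * z) x₂ y * Φ x₁ z (x₂ * y)) * (Φ (y * x₁) x₂ z * Φ y x₁ (x₂ * z)) * (Φ (y * z) x₁ x₂ * Φ y z (x₁ * x₂)) * (Φ (z * x₁) y x₂ * Φ z x₁ (y * x₂)) * (Φ x₁ x₂ z * Φ x₁ (x₂ * z) y * Φ x₂ z y) * (Φ x₁ y x₂ * Φ x₁ (y * x₂) z * Φ y x₂ z) * (Φ x₁ z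 y * Φ x₁ (z * y) x₂ * Φ z y x₂) * (Φ y x₁ z * Φ y (x₁ * z) x₂ * Φ x₁ z x₂) * (Φ z x₁ x₂ * Φ z (x₁ * x₂) y * Φ x₁ x₂ y) * (Φ z y x₁ * Φ z (y * x₁) x₂ * Φ y x₁ x₂) = (Φ x₁ x₂ y * Φ x₁ (x₂ * y) z * Φ x₂ y z) * (Φ x₁ y z * Φ x₁ (y * z) x₂ * Φ y z x₂) * (Φ x₁ z x₂ * Φ x₁ (z * x₂) y * Φ z x₂ y) * (Φ y x₁ x₂ * Φ y (x₁ * x₂) z * Φ x₁ x₂ z) * (Φ y z x₁ * Φ y (z * x₁) x₂ * Φ z x₁ x₂) * (Φ z x₁ y * Φ z (x₁ * y) x₂ * Φ x₁ y x₂) * (Φ (x₁ * x₂) z y * Φ x₁ x₂ (z * y)) * (Φ (x₁ * y) x₂ z * Φ x₁ y (x₂ * z)) * (Φ (x₁ * z) y x₂ * Φ x₁ z (y * x₂)) * (Φ (y * x₁) z x₂ * Φ y x₁ (z * x₂)) * (Φ (z * x₁) x₂ y * Φ z x₁ (x₂ * y)) * (Φ (z * y) x₁ x₂ * Φ z y (x₁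 * x₂)) := by
      rw [hcoc x₁ x₂ y z, hcoc x₁ y z x₂, hcoc x₁ z x₂ y, hcoc y x₁ x₂ z, hcoc y z x₁ x₂, hcoc z x₁ y x₂, hcoc x₁ x₂ z y, hcoc x₁ y x₂ z, hcoc x₁ z y x₂, hcoc y x₁ z x₂, hcoc z x₁ x₂ y, hcoc z y x₁ x₂]
    have hfree : bfun Φ (x₁ * x₂) y z * ((Φ x₁ x₂ y * Φ x₁ (x₂ * y) z * Φ x₂ y z) * (Φ x₁ y z * Φ x₁ (y * z) x₂ * Φ y z x₂) * (Φ x₁ z x₂ * Φ x₁ (z * x₂) y * Φ z x₂ y) * (Φ y x₁ x₂ * Φ y (x₁ * x₂) z * Φ x₁ x₂ z) * (Φ y z x₁ * Φ y (z * x₁) x₂ * Φ z x₁ x₂) * (Φ z x₁ y * Φ z (x₁ * y) x₂ * Φ x₁ y x₂) * (Φ (x₁ * x₂) z y * Φ x₁ x₂ (z * y)) * (Φ (x₁ * y) x₂ z * Φ x₁ y (x₂ * z)) * (Φ (x₁ * z) y x₂ * Φ x₁ z (y * x₂)) * (Φ (y * x₁) z x₂ * Φ y x₁ (z * x₂)) *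 (Φ (z * x₁) x₂ y * Φ z x₁ (x₂ * y)) * (Φ (z * y) x₁ x₂ * Φ z y (x₁ * x₂))) = (bfun Φ x₁ y z * bfun Φ x₂ y z) * ((Φ (x₁ * x₂) y z * Φ x₁ x₂ (y * z)) * (Φ (x₁ * y) z x₂ * Φ x₁ y (z * x₂)) * (Φ (x₁ * z) x₂ y * Φ x₁ z (x₂ * y)) * (Φ (y * x₁) x₂ z * Φ y x₁ (x₂ * z)) * (Φ (y * z) x₁ x₂ * Φ y z (x₁ * x₂)) * (Φ (z * x₁) y x₂ * Φ z x₁ (y * x₂)) * (Φ x₁ x₂ z * Φ x₁ (x₂ * z) y * Φ x₂ z y) * (Φ x₁ y x₂ * Φ x₁ (y * x₂) z * Φ y x₂ z) * (Φ x₁ z y * Φ x₁ (z * y) x₂ * Φ z y x₂) * (Φ y x₁ z * Φ y (x₁ * z) x₂ * Φ x₁ z x₂) * (Φ z x₁ x₂ * Φ z (x₁ * x₂) y * Φ x₁ x₂ y) * (Φ z y x₁ * Φ z (y * x₁) x₂ * Φ y x₁ x₂)) := by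
      simp only [bfun, Units.ext_iff, Units.val_mul, Units.val_div_eq_div_val]
      field_simp
      simp only [mul_comm]
      ring
    rw [key] at hfree
    exact mul_right_cancel hfree
  have hmul2 : ∀ x y₁ y₂ z : G, bfun Φ x (y₁ * y₂) z = bfun Φ x y₁ z * bfun Φ x y₂ z := by
    intro x y₁ y₂ z
    have key : (Φ (x * y₁) z y₂ * Φ x y₁ (z * y₂)) * (Φ (y₁ * x) y₂ z * Φ y₁ x (y₂ * z)) * (Φ (y₁ * y₂) z x * Φ y₁ y₂ (z * x)) * (Φ (y₁ * z) x y₂ * Φ y₁ z (x * y₂)) * (Φ (z * x) y₁ y₂ * Φ z x (y₁ * y₂)) * (Φ (z * y₁) y₂ x * Φ z y₁ (y₂ * x)) * (Φ x y₁ y₂ * Φ x (y₁ * y₂) z * Φ y₁ y₂ z) * (Φ x z y₁ * Φ x (z * y₁) y₂ * Φ z y₁ y₂) * (Φ y₁ x z * Φ y₁ (x * z) y₂ * Φ x z y₂) * (Φ y₁ y₂ x * Φ y₁ (y₂ * x) z * Φ y₂ x z) * (Φ y₁ z y₂ * Φ y₁ (z * y₂) x * Φ z y₂ x) * (Φ z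 y₁ x * Φ z (y₁ * x) y₂ * Φ y₁ x y₂) = (Φ x y₁ z * Φ x (y₁ * z) y₂ * Φ y₁ z y₂) * (Φ y₁ x y₂ * Φ y₁ (x * y₂) z * Φ x y₂ z) * (Φ y₁ y₂ z * Φ y₁ (y₂ * z) x * Φ y₂ z x) * (Φ y₁ z x * Φ y₁ (z * x) y₂ * Φ z x y₂) * (Φ z x y₁ * Φ z (x * y₁) y₂ * Φ x y₁ y₂) * (Φ z y₁ y₂ * Φ z (y₁ * y₂) x * Φ y₁ y₂ x) * (Φ (x * y₁) y₂ z * Φ x y₁ (y₂ * z)) * (Φ (x * z) y₁ y₂ * Φ x z (y₁ * y₂)) * (Φ (y₁ * x) z y₂ * Φ y₁ x (z * y₂)) * (Φ (y₁ * y₂) x z * Φ y₁ y₂ (x * z)) * (Φ (y₁ * z) y₂ x * Φ y₁ z (y₂ * x)) * (Φ (z * y₁) x y₂ * Φ z y₁ (x * y₂)) := by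
      rw [hcoc x y₁ z y₂, hcoc y₁ x y₂ z, hcoc y₁ y₂ z x, hcoc y₁ z x y₂, hcoc z x y₁ y₂, hcoc z y₁ y₂ x, hcoc x y₁ y₂ z, hcoc x z y₁ y₂, hcoc y₁ x z y₂, hcoc y₁ y₂ x z, hcoc y₁ z y₂ x, hcoc z y₁ x y₂]
    have hfree : bfun Φ x (y₁ * y₂) z * ((Φ x y₁ z * Φ x (y₁ * z) y₂ * Φ y₁ z y₂) * (Φ y₁ x y₂ * Φ y₁ (x * y₂) z * Φ x y₂ z) * (Φ y₁ y₂ z * Φ y₁ (y₂ * z) x * Φ y₂ z x) * (Φ y₁ z x * Φ y₁ (z * x) y₂ * Φ z x y₂) * (Φ z x y₁ * Φ z (x * y₁) y₂ * Φ x y₁ y₂) * (Φ z y₁ y₂ * Φ z (y₁ * y₂) x * Φ y₁ y₂ x) * (Φ (x * y₁) y₂ z * Φ x y₁ (y₂ * z)) * (Φ (x * z) y₁ y₂ * Φ x z (y₁ * y₂)) * (Φ (y₁ * x) z y₂ * Φ y₁ x (z * y₂)) * (Φ (y₁ * y₂) x z * Φ y₁ y₂ (x * z)) * (Φ (y₁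 * z) y₂ x * Φ y₁ z (y₂ * x)) * (Φ (z * y₁) x y₂ * Φ z y₁ (x * y₂))) = (bfun Φ x y₁ z * bfun Φ x y₂ z) * ((Φ (x * y₁) z y₂ * Φ x y₁ (z * y₂)) * (Φ (y₁ * x) y₂ z * Φ y₁ x (y₂ * z)) * (Φ (y₁ * y₂) z x * Φ y₁ y₂ (z * x)) * (Φ (y₁ * z) x y₂ * Φ y₁ z (x * y₂)) * (Φ (z * x) y₁ y₂ * Φ z x (y₁ * y₂)) * (Φ (z * y₁) y₂ x * Φ z y₁ (y₂ * x)) * (Φ x y₁ y₂ * Φ x (y₁ * y₂) z * Φ y₁ y₂ z) * (Φ x z y₁ * Φ x (z * y₁) y₂ * Φ z y₁ y₂) * (Φ y₁ x z * Φ y₁ (x * z) y₂ * Φ x z y₂) * (Φ y₁ y₂ x * Φ y₁ (y₂ * x) z * Φ y₂ x z) * (Φ y₁ z y₂ * Φ y₁ (z * y₂) x * Φ z y₂ x) * (Φ z y₁ x * Φ z (y₁ * x) y₂ * Φ y₁ x y₂)) := by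
      simp only [bfun, Units.ext_iff, Units.val_mul, Units.val_div_eq_div_val]
      field_simp
      simp only [mul_comm]
      ring
    rw [key] at hfree
    exact mul_right_cancel hfree
  have hmul3 : ∀ x y z₁ z₂ : G, bfun Φ x y (z₁ * z₂) = bfun Φ x y z₁ * bfun Φ x y z₂ := by
    intro x y z₁ z₂
    have key : (Φ (x * y) z₁ z₂ * Φ x y (z₁ * z₂)) * (Φ (x * z₁) z₂ y * Φ x z₁ (z₂ * y)) * (Φ (y * z₁) x z₂ * Φ y z₁ (x * z₂)) * (Φ (z₁ * x) y z₂ * Φ z₁ x (y * z₂)) * (Φ (z₁ * y) z₂ x * Φ z₁ y (z₂ * x)) * (Φ (z₁ * z₂) x y * Φ z₁ z₂ (x * y)) * (Φ x z₁ y * Φ x (z₁ * y) z₂ * Φ z₁ y z₂) * (Φ y x z₁ * Φ y (x * z₁) z₂ * Φ x z₁ z₂) * (Φ y z₁ z₂ * Φ y (z₁ * z₂) x * Φ z₁ z₂ x) * (Φ z₁ x z₂ * Φ z₁ (x * z₂) y * Φ x z₂ y) * (Φ z₁ y x * Φ z₁ (y * x) z₂ * Φ y x z₂) * (Φ z₁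 z₂ y * Φ z₁ (z₂ * y) x * Φ z₂ y x) = (Φ x y z₁ * Φ x (y * z₁) z₂ * Φ y z₁ z₂) * (Φ x z₁ z₂ * Φ x (z₁ * z₂) y * Φ z₁ z₂ y) * (Φ y z₁ x * Φ y (z₁ * x) z₂ * Φ z₁ x z₂) * (Φ z₁ x y * Φ z₁ (x * y) z₂ * Φ x y z₂) * (Φ z₁ y z₂ * Φ z₁ (y * z₂) x * Φ y z₂ x) * (Φ z₁ z₂ x * Φ z₁ (z₂ * x) y * Φ z₂ x y) * (Φ (x * z₁) y z₂ * Φ x z₁ (y * z₂)) * (Φ (y * x) z₁ z₂ * Φ y x (z₁ * z₂)) * (Φ (y * z₁) z₂ x * Φ y z₁ (z₂ * x)) * (Φ (z₁ * x) z₂ y * Φ z₁ x (z₂ * y)) * (Φ (z₁ * y) x z₂ * Φ z₁ y (x * z₂)) * (Φ (z₁ * z₂) y x * Φ z₁ z₂ (y * x)) := by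
      rw [hcoc x y z₁ z₂, hcoc x z₁ z₂ y, hcoc y z₁ x z₂, hcoc z₁ x y z₂, hcoc z₁ y z₂ x, hcoc z₁ z₂ x y, hcoc x z₁ y z₂, hcoc y x z₁ z₂, hcoc y z₁ z₂ x, hcoc z₁ x z₂ y, hcoc z₁ y x z₂, hcoc z₁ z₂ y x]
    have hfree : bfun Φ x y (z₁ * z₂) * ((Φ x y z₁ * Φ x (y * z₁) z₂ * Φ y z₁ z₂) * (Φ x z₁ z₂ * Φ x (z₁ * z₂) y * Φ z₁ z₂ y) * (Φ y z₁ x * Φ y (z₁ * x) z₂ * Φ z₁ x z₂) * (Φ z₁ x y * Φ z₁ (x * y) z₂ * Φ x y z₂) * (Φ z₁ y z₂ * Φ z₁ (y * z₂) x * Φ y z₂ x) * (Φ z₁ z₂ x * Φ z₁ (z₂ * x) y * Φ z₂ x y) * (Φ (x * z₁) y z₂ * Φ x z₁ (y * z₂)) * (Φ (y * x) z₁ z₂ * Φ y x (z₁ * z₂)) * (Φ (y * z₁) z₂ x * Φ y z₁ (z₂ * x)) * (Φ (z₁ * x) z₂ y * Φ z₁ x (z₂ * y)) * (Φ (z₁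 * y) x z₂ * Φ z₁ y (x * z₂)) * (Φ (z₁ * z₂) y x * Φ z₁ z₂ (y * x))) = (bfun Φ x y z₁ * bfun Φ x y z₂) * ((Φ (x * y) z₁ z₂ * Φ x y (z₁ * z₂)) * (Φ (x * z₁) z₂ y * Φ x z₁ (z₂ * y)) * (Φ (y * z₁) x z₂ * Φ y z₁ (x * z₂)) * (Φ (z₁ * x) y z₂ * Φ z₁ x (y * z₂)) * (Φ (z₁ * y) z₂ x * Φ z₁ y (z₂ * x)) * (Φ (z₁ * z₂) x y * Φ z₁ z₂ (x * y)) * (Φ x z₁ y * Φ x (z₁ * y) z₂ * Φ z₁ y z₂) * (Φ y x z₁ * Φ y (x * z₁) z₂ * Φ x z₁ z₂) * (Φ y z₁ z₂ * Φ y (z₁ * z₂) x * Φ z₁ z₂ x) * (Φ z₁ x z₂ * Φ z₁ (x * z₂) y * Φ x z₂ y) * (Φ z₁ y x * Φ z₁ (y * x) z₂ * Φ y x z₂) * (Φ z₁ z₂ y * Φ z₁ (z₂ * y) x * Φ z₂ y x)) := by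
      simp only [bfun, Units.ext_iff, Units.val_mul, Units.val_div_eq_div_val]
      field_simp
      simp only [mul_comm]
      ring
    rw [key] at hfree
    exact mul_right_cancel hfree
  refine ⟨hmul1, hmul2, hmul3, ?_⟩
  have d1 : orderOf (bfun Φ g₁ g₂ g₃) ∣ orderOf g₁ :=
    bfun_aux_order (fun x => bfun Φ x g₂ g₃) (fun a b => hmul1 a b g₂ g₃) g₁
  have d2 : orderOf (bfun Φ g₁ g₂ g₃) ∣ orderOf g₂ :=
    bfun_aux_order (fun y => bfun Φ g₁ y g₃) (fun a b => hmul2 g₁ a b g₃) g₂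
  have d3 : orderOf (bfun Φ g₁ g₂ g₃) ∣ orderOf g₃ :=
    bfun_aux_order (fun z => bfun Φ g₁ g₂ z) (fun a b => hmul3 g₁ g₂ a b) g₃
  exact Nat.dvd_gcd d1 (Nat.dvd_gcd d2 d3)
end
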